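/- For every c ∈ [0,1] the constrained density g_c satisfies: (a) g_c(0) = c; (b) c ≤ g_c(s) ≤ min(1, c + ℓ·s) for every s ≥ 0; (c) s ↦ g_c(s) is nondecreasing on [0,∞) and, for each fixed s, c ↦ g_c(s) is nondecreasing on [0,1]; (d) |g_c(s) − g_c(t)| ≤ ℓ·|s − t| for all s, t ≥ 0; (e) g_c(s₁ + s₂) ≤ g₀(s₁) + g_c(s₂) for all s₁, s₂ ≥ 0; and (f) if c > 0 then lim_{s→0⁺} (g_c(s) − c)/s = 0. -/

import Mathlib

/-!
The energy of a profile dominates half its total variation, hence `sup γ`, which gives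
`c ≤ g_c`. The upper bounds come from two competitors: the tent of height `c`, whose derivative
is `±2c`, so that its energy density is at most `√((ℓs)² + c²)` (this gives (a), the bound
`c + ℓs` and (f)); and the trapezoid with ramps of width `ε`, whose energy is at most
`1 + 2ℓsε` because `f₁(1) = 0` kills the density on the plateau. Monotonicity in `s` and the
Lipschitz bound hold pointwise for the energy density. For (e), compressing a profile into an
interval of length `l` multiplies the load by `l`, so nearly optimal profiles for `g₀(s₁)` and
`g_c(s₂)`, concatenated in the ratio `s₁ : s₂`, compete for `g_c(s₁ + s₂)`; vanishing loads
are handled by shifting both loads by `δ > 0` and using the Lipschitz bound.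
-/

open MeasureTheory Set Filter

/-- Hypotheses on the function `f₁` from Section 6.1 of the paper. -/
structure F1Hyp (ℓ ℓ₁ : ℝ) (f₁ : ℝ → ℝ) : Prop where
  hl : 0 < ℓ
  hl1 : 0 < ℓ₁
  cont : ContinuousOn f₁ (Icc 0 1)
  diff : ∃ d : ℝ → ℝ, ContinuousOn d (Ioc 0 1) ∧
    ∀ t ∈ Ioc (0:ℝ) 1, HasDerivWithinAt f₁ (d t) (Ioc 0 1) t
  anti : StrictAntiOn f₁ (Icc 0 1)
  nonneg : ∀ t ∈ Icc (0:ℝ) 1, 0 ≤ f₁ t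
  f10 : f₁ 0 = ℓ
  f11 : f₁ 1 = 0
  convexSqrt : ConvexOn ℝ (Icc 0 1) (fun u => f₁ (Real.sqrt u))
  lim0 : Tendsto (fun s => (f₁ s - ℓ + ℓ₁ * s) / s) (nhdsWithin 0 (Ioi 0)) (nhds 0)

/-- `γ` is admissible, with a.e. derivative `γ'` (absolute continuity is encoded by the
fundamental theorem of calculus representation with an `L¹` derivative). -/
def Admissible (γ γ' : ℝ → ℝ) : Prop :=
  IntegrableOn γ' (Icc 0 1) ∧
  (∀ t ∈ Icc (0:ℝ) 1, γ t = ∫ u in (0:ℝ)..t, γ' u) ∧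
  (∀ t ∈ Icc (0:ℝ) 1, 0 ≤ γ t ∧ γ t ≤ 1) ∧
  γ 0 = 0 ∧ γ 1 = 0

/-- The energy in the characterization (6.11). -/
noncomputable def energy (f₁ : ℝ → ℝ) (s : ℝ) (γ γ' : ℝ → ℝ) : ℝ :=
  ∫ t in (0:ℝ)..1, Real.sqrt (s ^ 2 * (f₁ (Real.sqrt (γ t))) ^ 2 + (γ' t) ^ 2 / 4)

/-- The cohesive energy density of pristine material, via characterization (6.11). -/
noncomputable def g0 (f₁ : ℝ → ℝ) (s : ℝ) : ℝ :=
  sInf {x | ∃ γ γ' : ℝ → ℝ, Admissible γ γ' ∧ x = energy f₁ s γ γ'}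


/-- The constrained cohesive energy density `g_c` of (7.6): the infimum is restricted to
admissible profiles with `sup_{[0,1]} γ ≥ c`. -/
noncomputable def gc (f₁ : ℝ → ℝ) (c s : ℝ) : ℝ :=
  sInf {x | ∃ γ γ' : ℝ → ℝ, Admissible γ γ' ∧ c ≤ sSup (γ '' Icc (0:ℝ) 1) ∧
    x = energy f₁ s γ γ'}

open Topology

lemma sqrt_sq_add_sq_le_add {a b : ℝ} (ha : 0 ≤ a) (hb : 0 ≤ b) : √(a ^ 2 + b ^ 2) ≤ a + b :=
  Real.sqrt_le_iff.2 ⟨add_nonneg ha hb, by nlinarith [mul_nonneg ha hb]⟩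

lemma sqrt_sq_add_sq_le_add_sq_div {x k : ℝ} (hk : 0 < k) :
    √(x ^ 2 + k ^ 2) ≤ k + x ^ 2 / (2 * k) := by
  refine Real.sqrt_le_iff.2 ⟨by positivity, ?_⟩
  have hx : 2 * k * (x ^ 2 / (2 * k)) = x ^ 2 := by field_simp
  nlinarith [sq_nonneg (x ^ 2 / (2 * k))]

/-- The triangle inequality for the Euclidean norms of `(s A, √B)` and `(t A, √B)`. -/
lemma sqrt_sq_mul_add_le (s t : ℝ) {A B : ℝ} (hA : 0 ≤ A) (hB : 0 ≤ B) :
    √(s ^ 2 * A ^ 2 + B) ≤ √(t ^ 2 * A ^ 2 + B) + |s - t| * A := by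
  have hR : |t| * A ≤ √(t ^ 2 * A ^ 2 + B) :=
    Real.le_sqrt_of_sq_le (by rw [mul_pow, sq_abs]; linarith)
  have hst : |s| ≤ |t| + |s - t| := by
    simpa using abs_add_le t (s - t)
  refine Real.sqrt_le_iff.2 ⟨by positivity, ?_⟩
  rw [add_sq, Real.sq_sqrt (by positivity)]
  have h1 : s ^ 2 * A ^ 2 ≤ (|t| * A + |s - t| * A) ^ 2 := by
    rw [← sq_abs s, ← mul_pow, ← add_mul]
    exact pow_le_pow_left₀ (by positivity) (by nlinarith) 2
  have h2 : (|t| * A) ^ 2 = t ^ 2 * A ^ 2 := by rw [mul_pow, sq_abs]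
  have h3 := mul_le_mul_of_nonneg_right hR (by positivity : 0 ≤ 2 * (|s - t| * A))
  nlinarith

lemma le_of_forall_mem_Ioo_le_add_mul {a b K r : ℝ} (hr : 0 < r)
    (h : ∀ δ ∈ Ioo 0 r, a ≤ b + K * δ) : a ≤ b := by
  have hlim : Tendsto (fun δ => b + K * δ) (𝓝[>] 0) (𝓝 b) := by
    have : Continuous fun δ : ℝ => b + K * δ := by fun_prop
    simpa using (this.tendsto 0).mono_left nhdsWithin_le_nhds
  exact ge_of_tendsto hlim (eventually_of_mem (Ioo_mem_nhdsGT hr) h)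

lemma integral_comp_sub_div (g : ℝ → ℝ) (a x : ℝ) {c : ℝ} (hc : c ≠ 0) :
    ∫ u in a..a + c * x, g ((u - a) / c) = c * ∫ v in 0..x, g v := by
  rw [intervalIntegral.integral_comp_sub_right (fun w => g (w / c)),
    intervalIntegral.integral_comp_div _ hc]
  simp [hc]

lemma IntervalIntegrable.comp_sub_div {g : ℝ → ℝ} (hg : IntervalIntegrable g volume 0 1)
    (a c : ℝ) :
    IntervalIntegrable (fun u => g ((u - a) / c)) volume a (a + c) := by
  simpa [div_eq_mul_inv, add_comm] using (hg.comp_mul_right (c := c⁻¹)).comp_sub_right a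

namespace Admissible

variable {γ γ' : ℝ → ℝ}

lemma integrableOn (h : Admissible γ γ') : IntegrableOn γ' (Icc 0 1) := h.1

lemma eq_integral (h : Admissible γ γ') {t : ℝ} (ht : t ∈ Icc (0:ℝ) 1) :
    γ t = ∫ u in (0:ℝ)..t, γ' u := h.2.1 t ht

lemma mem_Icc (h : Admissible γ γ') {t : ℝ} (ht : t ∈ Icc (0:ℝ) 1) : γ t ∈ Icc (0:ℝ) 1 :=
  h.2.2.1 t ht

lemma apply_zero (h : Admissible γ γ') : γ 0 = 0 := h.2.2.2.1

lemma apply_one (h : Admissible γ γ') : γ 1 = 0 := h.2.2.2.2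

lemma intervalIntegrable (h : Admissible γ γ') {a b : ℝ} (ha : a ∈ Icc (0:ℝ) 1)
    (hb : b ∈ Icc (0:ℝ) 1) : IntervalIntegrable γ' volume a b :=
  (h.integrableOn.mono_set (uIcc_subset_Icc ha hb)).intervalIntegrable

lemma integral_eq_sub (h : Admissible γ γ') {a b : ℝ} (ha : a ∈ Icc (0:ℝ) 1)
    (hb : b ∈ Icc (0:ℝ) 1) : ∫ u in a..b, γ' u = γ b - γ a := by
  have h0 : (0:ℝ) ∈ Icc (0:ℝ) 1 := ⟨le_rfl, zero_le_one⟩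
  rw [h.eq_integral ha, h.eq_integral hb, intervalIntegral.integral_interval_sub_left
    (h.intervalIntegrable h0 hb) (h.intervalIntegrable h0 ha)]

lemma continuousOn (h : Admissible γ γ') : ContinuousOn γ (Icc 0 1) := by
  have := intervalIntegral.continuousOn_primitive_interval (a := 0) (b := 1) (μ := volume)
    (f := γ') (by rw [uIcc_of_le zero_le_one]; exact h.integrableOn)
  rw [uIcc_of_le zero_le_one] at this
  exact this.congr fun t ht => h.eq_integral ht

lemma bddAbove_image (h : Admissible γ γ') : BddAbove (γ '' Icc 0 1) :=
  ⟨1, by rintro _ ⟨t, ht, rfl⟩; exact (h.mem_Icc ht).2⟩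

lemma le_sSup_image (h : Admissible γ γ') {t : ℝ} (ht : t ∈ Icc (0:ℝ) 1) :
    γ t ≤ sSup (γ '' Icc 0 1) :=
  le_csSup h.bddAbove_image (mem_image_of_mem γ ht)

lemma sSup_image_nonneg (h : Admissible γ γ') : 0 ≤ sSup (γ '' Icc 0 1) :=
  h.apply_zero.ge.trans (h.le_sSup_image ⟨le_rfl, zero_le_one⟩)

lemma two_mul_le_integral_abs (h : Admissible γ γ') {t : ℝ} (ht : t ∈ Icc (0:ℝ) 1) :
    2 * γ t ≤ ∫ u in (0:ℝ)..1, |γ' u| := by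
  have h0 : (0:ℝ) ∈ Icc (0:ℝ) 1 := ⟨le_rfl, zero_le_one⟩
  have h1 : (1:ℝ) ∈ Icc (0:ℝ) 1 := ⟨zero_le_one, le_rfl⟩
  have hleft := h.integral_eq_sub h0 ht
  have hright := h.integral_eq_sub ht h1
  rw [h.apply_zero] at hleft
  rw [h.apply_one] at hright
  rw [← intervalIntegral.integral_add_adjacent_intervals
    (h.intervalIntegrable h0 ht).abs (h.intervalIntegrable ht h1).abs]
  linarith [(le_abs_self (∫ u in (0:ℝ)..t, γ' u)).trans
      (intervalIntegral.abs_integral_le_integral_abs ht.1),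
    (neg_le_abs (∫ u in t..1, γ' u)).trans (intervalIntegral.abs_integral_le_integral_abs ht.2)]

lemma integral_abs_eq_of_unimodal (h : Admissible γ γ') {m : ℝ} (hm : m ∈ Icc (0:ℝ) 1)
    (hinc : ∀ t ∈ Icc 0 m, 0 ≤ γ' t) (hdec : ∀ t ∈ Ioc m 1, γ' t ≤ 0) :
    ∫ u in (0:ℝ)..1, |γ' u| = 2 * γ m := by
  have h0 : (0:ℝ) ∈ Icc (0:ℝ) 1 := ⟨le_rfl, zero_le_one⟩
  have h1 : (1:ℝ) ∈ Icc (0:ℝ) 1 := ⟨zero_le_one, le_rfl⟩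
  have hleft : ∫ u in (0:ℝ)..m, |γ' u| = ∫ u in (0:ℝ)..m, γ' u :=
    intervalIntegral.integral_congr fun t ht =>
      abs_of_nonneg (hinc t (by rwa [uIcc_of_le hm.1] at ht))
  have hright : ∫ u in m..1, |γ' u| = -∫ u in m..1, γ' u := by
    rw [← intervalIntegral.integral_neg]
    refine intervalIntegral.integral_congr_ae (ae_of_all _ fun t ht => ?_)
    exact abs_of_nonpos (hdec t (by rwa [uIoc_of_le hm.2] at ht))
  rw [← intervalIntegral.integral_add_adjacent_intervals
    (h.intervalIntegrable h0 hm).abs (h.intervalIntegrable hm h1).abs, hleft, hright,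
    h.integral_eq_sub h0 hm, h.integral_eq_sub hm h1, h.apply_zero, h.apply_one]
  ring

lemma const_mul (h : Admissible γ γ') {c : ℝ} (hc : c ∈ Icc (0:ℝ) 1) :
    Admissible (fun t => c * γ t) (fun t => c * γ' t) := by
  refine ⟨h.integrableOn.const_mul c, fun t ht => ?_, fun t ht => ?_, ?_, ?_⟩
  · rw [intervalIntegral.integral_const_mul, ← h.eq_integral ht]
  · have := h.mem_Icc ht
    exact ⟨mul_nonneg hc.1 this.1, mul_le_one₀ hc.2 this.1 this.2⟩
  · simp [h.apply_zero]
  · simp [h.apply_one]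

end Admissible

noncomputable def energyDensity (f₁ : ℝ → ℝ) (s : ℝ) (γ γ' : ℝ → ℝ) (t : ℝ) : ℝ :=
  √(s ^ 2 * f₁ √(γ t) ^ 2 + γ' t ^ 2 / 4)

lemma energy_eq_integral_energyDensity (f₁ : ℝ → ℝ) (s : ℝ) (γ γ' : ℝ → ℝ) :
    energy f₁ s γ γ' = ∫ t in (0:ℝ)..1, energyDensity f₁ s γ γ' t := rfl

lemma energyDensity_le (f₁ : ℝ → ℝ) (s : ℝ) (γ γ' : ℝ → ℝ) (t : ℝ) :
    energyDensity f₁ s γ γ' t ≤ |s * f₁ √(γ t)| + |γ' t| / 2 := by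
  have := sqrt_sq_add_sq_le_add (abs_nonneg (s * f₁ √(γ t))) (by positivity : 0 ≤ |γ' t| / 2)
  rwa [sq_abs, div_pow, sq_abs, mul_pow, show (2:ℝ) ^ 2 = 4 by norm_num] at this

lemma energy_nonneg (f₁ : ℝ → ℝ) (s : ℝ) (γ γ' : ℝ → ℝ) : 0 ≤ energy f₁ s γ γ' :=
  intervalIntegral.integral_nonneg zero_le_one fun _ _ => Real.sqrt_nonneg _

lemma integral_energyDensity_comp_sub_div (f₁ : ℝ → ℝ) (s a : ℝ) {c : ℝ} (hc : 0 < c)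
    (γ γ' : ℝ → ℝ) :
    ∫ u in a..a + c,
        energyDensity f₁ s (fun u => γ ((u - a) / c)) (fun u => γ' ((u - a) / c) / c) u
      = energy f₁ (c * s) γ γ' := by
  simp only [energyDensity]
  conv_lhs => rw [show a + c = a + c * 1 by ring]
  rw [integral_comp_sub_div
    (fun v => √(s ^ 2 * f₁ √(γ v) ^ 2 + (γ' v / c) ^ 2 / 4)) a 1 hc.ne',
    energy, ← intervalIntegral.integral_const_mul]
  refine intervalIntegral.integral_congr fun v _ => ?_
  have hv : (c * s) ^ 2 * f₁ √(γ v) ^ 2 + γ' v ^ 2 / 4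
      = c ^ 2 * (s ^ 2 * f₁ √(γ v) ^ 2 + (γ' v / c) ^ 2 / 4) := by
    field_simp
  simp only [hv, Real.sqrt_mul (sq_nonneg c), Real.sqrt_sq hc.le]

section Energy

variable {f₁ : ℝ → ℝ} {ℓ : ℝ} {γ γ' : ℝ → ℝ}

lemma Admissible.continuousOn_comp (hcont : ContinuousOn f₁ (Icc 0 1))
    (h : Admissible γ γ') : ContinuousOn (fun t => f₁ √(γ t)) (Icc 0 1) :=
  hcont.comp (Real.continuous_sqrt.comp_continuousOn h.continuousOn) fun _ ht =>
    ⟨Real.sqrt_nonneg _, Real.sqrt_le_one.2 (h.mem_Icc ht).2⟩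

lemma Admissible.comp_mem_Icc (hf : MapsTo f₁ (Icc 0 1) (Icc 0 ℓ)) (h : Admissible γ γ')
    {t : ℝ} (ht : t ∈ Icc (0:ℝ) 1) : f₁ √(γ t) ∈ Icc 0 ℓ :=
  hf ⟨Real.sqrt_nonneg _, Real.sqrt_le_one.2 (h.mem_Icc ht).2⟩

lemma Admissible.intervalIntegrable_energyDensity (hcont : ContinuousOn f₁ (Icc 0 1))
    (h : Admissible γ γ') (s : ℝ) :
    IntervalIntegrable (energyDensity f₁ s γ γ') volume 0 1 := by
  rw [intervalIntegrable_iff_integrableOn_Icc_of_le zero_le_one]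
  have hA := (h.continuousOn_comp hcont).integrableOn_Icc (μ := volume)
  have hmeas : AEStronglyMeasurable (energyDensity f₁ s γ γ') (volume.restrict (Icc 0 1)) :=
    (Real.continuous_sqrt.measurable.comp_aemeasurable
      (((hA.aestronglyMeasurable.aemeasurable.pow_const 2).const_mul (s ^ 2)).add
        ((h.integrableOn.aestronglyMeasurable.aemeasurable.pow_const 2).div_const 4))
      ).aestronglyMeasurable
  refine Integrable.mono' ((hA.const_mul s).abs.add (h.integrableOn.abs.div_const 2)) hmeas
    (ae_of_all _ fun t => ?_)
  exact (Real.norm_of_nonneg (Real.sqrt_nonneg _)).trans_le (energyDensity_le f₁ s γ γ' t)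

lemma Admissible.energy_mono (hcont : ContinuousOn f₁ (Icc 0 1)) (h : Admissible γ γ')
    {s t : ℝ} (hs : 0 ≤ s) (hst : s ≤ t) : energy f₁ s γ γ' ≤ energy f₁ t γ γ' :=
  intervalIntegral.integral_mono_on zero_le_one (h.intervalIntegrable_energyDensity hcont s)
    (h.intervalIntegrable_energyDensity hcont t) fun u _ =>
      Real.sqrt_le_sqrt (by gcongr)

lemma Admissible.energy_le_energy_add (hcont : ContinuousOn f₁ (Icc 0 1))
    (hf : MapsTo f₁ (Icc 0 1) (Icc 0 ℓ)) (h : Admissible γ γ') (s t : ℝ) :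
    energy f₁ s γ γ' ≤ energy f₁ t γ γ' + ℓ * |s - t| := by
  have hpt : ∀ u ∈ Icc (0:ℝ) 1,
      energyDensity f₁ s γ γ' u ≤ energyDensity f₁ t γ γ' u + ℓ * |s - t| := fun u hu => by
    have hA := h.comp_mem_Icc hf hu
    calc energyDensity f₁ s γ γ' u
        ≤ energyDensity f₁ t γ γ' u + |s - t| * f₁ √(γ u) :=
          sqrt_sq_mul_add_le s t hA.1 (by positivity)
      _ ≤ energyDensity f₁ t γ γ' u + ℓ * |s - t| := by
          rw [mul_comm ℓ]; gcongr; exact hA.2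
  calc energy f₁ s γ γ' ≤ ∫ u in (0:ℝ)..1, (energyDensity f₁ t γ γ' u + ℓ * |s - t|) :=
        intervalIntegral.integral_mono_on zero_le_one (h.intervalIntegrable_energyDensity hcont s)
          ((h.intervalIntegrable_energyDensity hcont t).add intervalIntegrable_const) hpt
    _ = energy f₁ t γ γ' + ℓ * |s - t| := by
        rw [intervalIntegral.integral_add (h.intervalIntegrable_energyDensity hcont t)
          intervalIntegrable_const]
        simp [energy_eq_integral_energyDensity]

lemma Admissible.le_energy (hcont : ContinuousOn f₁ (Icc 0 1)) (h : Admissible γ γ')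
    {c : ℝ} (hc : c ≤ sSup (γ '' Icc 0 1)) (s : ℝ) : c ≤ energy f₁ s γ γ' := by
  have hvar : (∫ u in (0:ℝ)..1, |γ' u|) / 2 ≤ energy f₁ s γ γ' := by
    rw [← intervalIntegral.integral_div]
    refine intervalIntegral.integral_mono_on zero_le_one
      ((h.intervalIntegrable ⟨le_rfl, zero_le_one⟩ ⟨zero_le_one, le_rfl⟩).abs.div_const 2)
      (h.intervalIntegrable_energyDensity hcont s) fun u _ => ?_
    refine Real.le_sqrt_of_sq_le ?_
    rw [div_pow, sq_abs]
    linarith [mul_nonneg (sq_nonneg s) (sq_nonneg (f₁ √(γ u)))]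
  refine hc.trans ((csSup_le ((nonempty_Icc.2 zero_le_one).image γ) ?_).trans hvar)
  rintro _ ⟨t, ht, rfl⟩
  linarith [h.two_mul_le_integral_abs ht]

end Energy

/-- For `ε = 1/2` this is the tent `1 - |2t - 1|`. -/
noncomputable def trapezoid (ε t : ℝ) : ℝ := min (min (t / ε) 1) ((1 - t) / ε)

noncomputable def trapezoidDeriv (ε t : ℝ) : ℝ :=
  if t ≤ ε then 1 / ε else if t ≤ 1 - ε then 0 else -(1 / ε)

section Trapezoid

variable {ε : ℝ}

lemma trapezoid_of_le (hε : ε ∈ Ioc (0:ℝ) (1/2)) {t : ℝ} (ht : t ≤ ε) :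
    trapezoid ε t = t / ε := by
  have h1 : t / ε ≤ 1 := (div_le_one hε.1).2 ht
  have h2 : t / ε ≤ (1 - t) / ε := div_le_div_of_nonneg_right (by linarith [hε.2]) hε.1.le
  rw [trapezoid, min_eq_left h1, min_eq_left h2]

lemma trapezoid_of_mem (hε : ε ∈ Ioc (0:ℝ) (1/2)) {t : ℝ} (ht : t ∈ Icc ε (1 - ε)) :
    trapezoid ε t = 1 := by
  have h1 : 1 ≤ t / ε := (one_le_div hε.1).2 ht.1
  have h2 : 1 ≤ (1 - t) / ε := (one_le_div hε.1).2 (by linarith [ht.2])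
  rw [trapezoid, min_eq_right h1, min_eq_left h2]

lemma trapezoid_of_ge (hε : ε ∈ Ioc (0:ℝ) (1/2)) {t : ℝ} (ht : 1 - ε ≤ t) :
    trapezoid ε t = (1 - t) / ε := by
  have h1 : 1 ≤ t / ε := (one_le_div hε.1).2 (by linarith [hε.2])
  have h2 : (1 - t) / ε ≤ 1 := (div_le_one hε.1).2 (by linarith)
  rw [trapezoid, min_eq_right h1, min_eq_right h2]

lemma hasDerivAt_trapezoid (hε : ε ∈ Ioc (0:ℝ) (1/2)) {t : ℝ} (htε : t ≠ ε)
    (htε' : t ≠ 1 - ε) : HasDerivAt (trapezoid ε) (trapezoidDeriv ε t) t := by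
  rcases htε.lt_or_gt with hlt | hgt
  · rw [trapezoidDeriv, if_pos hlt.le]
    refine ((hasDerivAt_id t).div_const ε).congr_of_eventuallyEq ?_
    filter_upwards [Iio_mem_nhds hlt] with u hu using trapezoid_of_le hε (le_of_lt hu)
  rcases htε'.lt_or_gt with hlt' | hgt'
  · rw [trapezoidDeriv, if_neg hgt.not_ge, if_pos hlt'.le]
    refine (hasDerivAt_const t (1:ℝ)).congr_of_eventuallyEq ?_
    filter_upwards [Ioo_mem_nhds hgt hlt'] with u hu using
      trapezoid_of_mem hε ⟨hu.1.le, hu.2.le⟩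
  · rw [trapezoidDeriv, if_neg hgt.not_ge, if_neg hgt'.not_ge, ← neg_div]
    refine (((hasDerivAt_id t).const_sub 1).div_const ε).congr_of_eventuallyEq ?_
    filter_upwards [Ioi_mem_nhds hgt'] with u hu using trapezoid_of_ge hε (le_of_lt hu)

lemma antitone_trapezoidDeriv (hε : ε ∈ Ioc (0:ℝ) (1/2)) : Antitone (trapezoidDeriv ε) := by
  have : 0 ≤ 1 / ε := by simpa using hε.1.le
  intro s t hst
  simp only [trapezoidDeriv]
  split_ifs <;> linarith

lemma admissible_trapezoid (hε : ε ∈ Ioc (0:ℝ) (1/2)) :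
    Admissible (trapezoid ε) (trapezoidDeriv ε) := by
  have hint : IntegrableOn (trapezoidDeriv ε) (Icc 0 1) :=
    (intervalIntegrable_iff_integrableOn_Icc_of_le zero_le_one).1
      (antitone_trapezoidDeriv hε).intervalIntegrable
  have hcont : Continuous (trapezoid ε) := by unfold trapezoid; fun_prop
  have h0 : trapezoid ε 0 = 0 := by rw [trapezoid_of_le hε hε.1.le, zero_div]
  refine ⟨hint, fun t ht => ?_, fun t ht => ⟨?_, ?_⟩, h0, ?_⟩
  · rw [integral_eq_of_hasDerivAt_off_countable_of_le _ _ ht.1 ((countable_singleton ε).insert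
      (1 - ε)) hcont.continuousOn (fun u hu => hasDerivAt_trapezoid hε
        (fun h => hu.2 (by simp [h])) (fun h => hu.2 (by simp [h])))
      (antitone_trapezoidDeriv hε).intervalIntegrable, h0, sub_zero]
  · exact le_min (le_min (div_nonneg ht.1 hε.1.le) zero_le_one)
      (div_nonneg (by linarith [ht.2]) hε.1.le)
  · exact (min_le_left _ _).trans (min_le_right _ _)
  · rw [trapezoid_of_ge hε (by linarith [hε.1]), sub_self, zero_div]

lemma one_le_sSup_trapezoid (hε : ε ∈ Ioc (0:ℝ) (1/2)) : 1 ≤ sSup (trapezoid ε '' Icc 0 1) :=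
  (trapezoid_of_mem hε ⟨hε.2, by linarith [hε.2]⟩).ge.trans
    ((admissible_trapezoid hε).le_sSup_image ⟨by norm_num, by norm_num⟩)

lemma integral_abs_trapezoidDeriv (hε : ε ∈ Ioc (0:ℝ) (1/2)) :
    ∫ u in (0:ℝ)..1, |trapezoidDeriv ε u| = 2 := by
  have hε' : 0 ≤ 1 / ε := by simpa using hε.1.le
  rw [(admissible_trapezoid hε).integral_abs_eq_of_unimodal (m := 1/2) ⟨by norm_num, by norm_num⟩
    (fun t ht => ?_) (fun t ht => ?_), trapezoid_of_mem hε ⟨hε.2, by linarith [hε.2]⟩, mul_one]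
  · simp only [trapezoidDeriv]
    split_ifs <;> linarith [ht.2, hε.2]
  · simp only [trapezoidDeriv]
    split_ifs <;> linarith [ht.1, hε.2]

/-- Outside the plateau `|trapezoidDeriv ε| = 1 / ε`, on it the energy density vanishes. -/
lemma energyDensity_trapezoid_le {f₁ : ℝ → ℝ} {ℓ : ℝ} (hf : MapsTo f₁ (Icc 0 1) (Icc 0 ℓ))
    (hf1 : f₁ 1 = 0) (hε : ε ∈ Ioc (0:ℝ) (1/2)) {s : ℝ} (hs : 0 ≤ s) {t : ℝ}
    (ht : t ∈ Icc (0:ℝ) 1) :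
    energyDensity f₁ s (trapezoid ε) (trapezoidDeriv ε) t
      ≤ (ε * s * ℓ + 1 / 2) * |trapezoidDeriv ε t| := by
  have hε0 := hε.1
  by_cases hplateau : ε < t ∧ t ≤ 1 - ε
  · have hd : trapezoidDeriv ε t = 0 := by
      rw [trapezoidDeriv, if_neg hplateau.1.not_ge, if_pos hplateau.2]
    simp [energyDensity, trapezoid_of_mem hε ⟨hplateau.1.le, hplateau.2⟩, hd, hf1]
  have hd : |trapezoidDeriv ε t| = 1 / ε := by
    rw [trapezoidDeriv]
    split_ifs with h₁ h₂
    · exact abs_of_pos (by positivity)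
    · exact absurd ⟨not_le.1 h₁, h₂⟩ hplateau
    · rw [abs_neg, abs_of_pos (by positivity)]
  have hA := (admissible_trapezoid hε).comp_mem_Icc hf ht
  calc energyDensity f₁ s (trapezoid ε) (trapezoidDeriv ε) t
      ≤ |s * f₁ √(trapezoid ε t)| + |trapezoidDeriv ε t| / 2 := energyDensity_le _ _ _ _ _
    _ ≤ s * ℓ + |trapezoidDeriv ε t| / 2 := by
        rw [abs_of_nonneg (mul_nonneg hs hA.1)]
        gcongr
        exact hA.2
    _ = (ε * s * ℓ + 1 / 2) * |trapezoidDeriv ε t| := by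
        rw [hd]; field_simp

lemma energy_trapezoid_le {f₁ : ℝ → ℝ} {ℓ : ℝ} (hcont : ContinuousOn f₁ (Icc 0 1))
    (hf : MapsTo f₁ (Icc 0 1) (Icc 0 ℓ)) (hf1 : f₁ 1 = 0) (hε : ε ∈ Ioc (0:ℝ) (1/2))
    {s : ℝ} (hs : 0 ≤ s) :
    energy f₁ s (trapezoid ε) (trapezoidDeriv ε) ≤ 1 + 2 * s * ℓ * ε := by
  calc energy f₁ s (trapezoid ε) (trapezoidDeriv ε)
      ≤ ∫ u in (0:ℝ)..1, (ε * s * ℓ + 1 / 2) * |trapezoidDeriv ε u| :=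
        intervalIntegral.integral_mono_on zero_le_one
          ((admissible_trapezoid hε).intervalIntegrable_energyDensity hcont s)
          ((antitone_trapezoidDeriv hε).intervalIntegrable.abs.const_mul _)
          fun t ht => energyDensity_trapezoid_le hf hf1 hε hs ht
    _ = 1 + 2 * s * ℓ * ε := by
        rw [intervalIntegral.integral_const_mul, integral_abs_trapezoidDeriv hε]
        ring

end Trapezoid

section Tent

variable {c : ℝ}

lemma admissible_tent (hc : c ∈ Icc (0:ℝ) 1) :
    Admissible (fun t => c * trapezoid (1/2) t) (fun t => c * trapezoidDeriv (1/2) t) :=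
  (admissible_trapezoid ⟨by norm_num, le_rfl⟩).const_mul hc

lemma le_sSup_tent (hc : c ∈ Icc (0:ℝ) 1) :
    c ≤ sSup ((fun t => c * trapezoid (1/2) t) '' Icc 0 1) := by
  have := (admissible_tent hc).le_sSup_image (t := 1/2) ⟨by norm_num, by norm_num⟩
  rwa [trapezoid_of_mem ⟨by norm_num, le_rfl⟩ ⟨le_rfl, by norm_num⟩, mul_one] at this

lemma energy_tent_le {f₁ : ℝ → ℝ} {ℓ : ℝ} (hcont : ContinuousOn f₁ (Icc 0 1))
    (hf : MapsTo f₁ (Icc 0 1) (Icc 0 ℓ)) (hc : c ∈ Icc (0:ℝ) 1) (s : ℝ) :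
    energy f₁ s (fun t => c * trapezoid (1/2) t) (fun t => c * trapezoidDeriv (1/2) t)
      ≤ √((ℓ * s) ^ 2 + c ^ 2) := by
  have hpt : ∀ t ∈ Icc (0:ℝ) 1, energyDensity f₁ s (fun t => c * trapezoid (1/2) t)
      (fun t => c * trapezoidDeriv (1/2) t) t ≤ √((ℓ * s) ^ 2 + c ^ 2) := fun t ht => by
    have hA := (admissible_tent hc).comp_mem_Icc hf ht
    have hd : trapezoidDeriv (1/2) t ^ 2 = 4 := by
      simp only [trapezoidDeriv]
      split_ifs <;> norm_num
      linarith
    refine Real.sqrt_le_sqrt ?_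
    rw [mul_pow c, hd, mul_pow ℓ, mul_comm (ℓ ^ 2)]
    have := pow_le_pow_left₀ hA.1 hA.2 2
    nlinarith [sq_nonneg s]
  calc energy f₁ s _ _ ≤ ∫ _ in (0:ℝ)..1, √((ℓ * s) ^ 2 + c ^ 2) :=
        intervalIntegral.integral_mono_on zero_le_one
          ((admissible_tent hc).intervalIntegrable_energyDensity hcont s)
          intervalIntegrable_const hpt
    _ = √((ℓ * s) ^ 2 + c ^ 2) := by simp

end Tent

lemma Admissible.integral_deriv_comp_sub_div {γ γ' : ℝ → ℝ} (h : Admissible γ γ') (a : ℝ) {c : ℝ}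
    (hc : c ≠ 0) {x : ℝ} (hx : x ∈ Icc (0:ℝ) 1) :
    ∫ u in a..a + c * x, γ' ((u - a) / c) / c = γ x := by
  rw [integral_comp_sub_div (fun v => γ' v / c) a x hc, intervalIntegral.integral_div,
    mul_div_cancel₀ _ hc, h.eq_integral hx]

noncomputable def concatProfile (l : ℝ) (γ₁ γ₂ : ℝ → ℝ) (t : ℝ) : ℝ :=
  if t ≤ l then γ₁ (t / l) else γ₂ ((t - l) / (1 - l))

noncomputable def concatProfileDeriv (l : ℝ) (γ₁' γ₂' : ℝ → ℝ) (t : ℝ) : ℝ :=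
  if t ≤ l then γ₁' (t / l) / l else γ₂' ((t - l) / (1 - l)) / (1 - l)

section Concat

variable {l : ℝ} {γ₁ γ₁' γ₂ γ₂' : ℝ → ℝ}

lemma integral_concatDeriv_of_le (hl : l ∈ Ioo (0:ℝ) 1) (h₁ : Admissible γ₁ γ₁') {t : ℝ}
    (ht : t ∈ Icc 0 l) : ∫ u in (0:ℝ)..t, concatProfileDeriv l γ₁' γ₂' u = γ₁ (t / l) := by
  have hmem : t / l ∈ Icc (0:ℝ) 1 :=
    ⟨div_nonneg ht.1 hl.1.le, (div_le_one hl.1).2 ht.2⟩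
  rw [← h₁.integral_deriv_comp_sub_div 0 hl.1.ne' hmem, zero_add, mul_div_cancel₀ _ hl.1.ne']
  refine intervalIntegral.integral_congr fun u hu => ?_
  rw [uIcc_of_le ht.1] at hu
  simp [concatProfileDeriv, hu.2.trans ht.2]

lemma integral_concatDeriv_of_ge (hl : l ∈ Ioo (0:ℝ) 1) (h₂ : Admissible γ₂ γ₂') {t : ℝ}
    (ht : t ∈ Icc l 1) :
    ∫ u in l..t, concatProfileDeriv l γ₁' γ₂' u = γ₂ ((t - l) / (1 - l)) := by
  have hl' : (1:ℝ) - l ≠ 0 := by linarith [hl.2]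
  have hmem : (t - l) / (1 - l) ∈ Icc (0:ℝ) 1 :=
    ⟨div_nonneg (by linarith [ht.1]) (by linarith [hl.2]),
      (div_le_one (by linarith [hl.2])).2 (by linarith [ht.2])⟩
  rw [← h₂.integral_deriv_comp_sub_div l hl' hmem, mul_div_cancel₀ _ hl', add_sub_cancel]
  refine intervalIntegral.integral_congr_ae (ae_of_all _ fun u hu => ?_)
  rw [uIoc_of_le ht.1] at hu
  simp [concatProfileDeriv, hu.1.not_ge]

lemma intervalIntegrable_concatDeriv (hl : l ∈ Ioo (0:ℝ) 1) (h₁ : Admissible γ₁ γ₁')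
    (h₂ : Admissible γ₂ γ₂') : IntervalIntegrable (concatProfileDeriv l γ₁' γ₂') volume 0 1 := by
  have i₁ : IntervalIntegrable (concatProfileDeriv l γ₁' γ₂') volume 0 l := by
    have := ((h₁.intervalIntegrable ⟨le_rfl, zero_le_one⟩ ⟨zero_le_one, le_rfl⟩).comp_sub_div
      0 l).div_const l
    simp only [sub_zero, zero_add] at this
    refine this.congr fun u hu => ?_
    rw [uIoc_of_le hl.1.le] at hu
    simp [concatProfileDeriv, hu.2]
  have i₂ : IntervalIntegrable (concatProfileDeriv l γ₁' γ₂') volume l 1 := by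
    have := ((h₂.intervalIntegrable ⟨le_rfl, zero_le_one⟩ ⟨zero_le_one, le_rfl⟩).comp_sub_div
      l (1 - l)).div_const (1 - l)
    rw [add_sub_cancel] at this
    refine this.congr fun u hu => ?_
    rw [uIoc_of_le hl.2.le] at hu
    simp [concatProfileDeriv, hu.1.not_ge]
  exact i₁.trans i₂

lemma Admissible.concat (hl : l ∈ Ioo (0:ℝ) 1) (h₁ : Admissible γ₁ γ₁')
    (h₂ : Admissible γ₂ γ₂') : Admissible (concatProfile l γ₁ γ₂) (concatProfileDeriv l γ₁' γ₂') := by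
  have hl' : (0:ℝ) < 1 - l := by linarith [hl.2]
  refine ⟨(intervalIntegrable_iff_integrableOn_Icc_of_le zero_le_one).1
    (intervalIntegrable_concatDeriv hl h₁ h₂), fun t ht => ?_, fun t ht => ?_, ?_, ?_⟩
  · rcases le_or_gt t l with htl | htl
    · rw [integral_concatDeriv_of_le hl h₁ ⟨ht.1, htl⟩, concatProfile, if_pos htl]
    · have hi := intervalIntegrable_concatDeriv hl h₁ h₂
      rw [← intervalIntegral.integral_add_adjacent_intervals
          (hi.mono_set (uIcc_subset_uIcc_left (by rw [uIcc_of_le zero_le_one]; exact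
            ⟨hl.1.le, hl.2.le⟩)))
          (hi.mono_set (uIcc_subset_uIcc (by rw [uIcc_of_le zero_le_one]; exact
            ⟨hl.1.le, hl.2.le⟩) (by rw [uIcc_of_le zero_le_one]; exact ht))),
        integral_concatDeriv_of_le hl h₁ ⟨hl.1.le, le_rfl⟩,
        integral_concatDeriv_of_ge hl h₂ ⟨htl.le, ht.2⟩, div_self hl.1.ne', h₁.apply_one,
        zero_add, concatProfile, if_neg htl.not_ge]
  · rw [concatProfile]
    split_ifs with htl
    · exact h₁.mem_Icc ⟨div_nonneg ht.1 hl.1.le, (div_le_one hl.1).2 htl⟩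
    · exact h₂.mem_Icc ⟨div_nonneg (by linarith) hl'.le, (div_le_one hl').2 (by linarith [ht.2])⟩
  · simp [concatProfile, hl.1.le, h₁.apply_zero]
  · simp [concatProfile, hl.2.not_ge, div_self hl'.ne', h₂.apply_one]

lemma sSup_image_le_sSup_image_concat (hl : l ∈ Ioo (0:ℝ) 1) (h₁ : Admissible γ₁ γ₁')
    (h₂ : Admissible γ₂ γ₂') : sSup (γ₂ '' Icc 0 1) ≤ sSup (concatProfile l γ₁ γ₂ '' Icc 0 1) := by
  have hl' : (0:ℝ) < 1 - l := by linarith [hl.2]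
  have h := h₁.concat hl h₂
  refine csSup_le ((nonempty_Icc.2 zero_le_one).image γ₂) ?_
  rintro _ ⟨v, hv, rfl⟩
  rcases hv.1.eq_or_lt with rfl | hv0
  · rw [h₂.apply_zero]
    exact h.sSup_image_nonneg
  · have ht : l + (1 - l) * v ∈ Icc (0:ℝ) 1 := ⟨by nlinarith [hl.1], by nlinarith [hv.2]⟩
    have hval : concatProfile l γ₁ γ₂ (l + (1 - l) * v) = γ₂ v := by
      rw [concatProfile, if_neg (by nlinarith), add_sub_cancel_left,
        mul_div_cancel_left₀ _ hl'.ne']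
    exact hval.ge.trans (h.le_sSup_image ht)

lemma energy_concat {f₁ : ℝ → ℝ} (hcont : ContinuousOn f₁ (Icc 0 1)) (hl : l ∈ Ioo (0:ℝ) 1)
    (h₁ : Admissible γ₁ γ₁') (h₂ : Admissible γ₂ γ₂') (s : ℝ) :
    energy f₁ s (concatProfile l γ₁ γ₂) (concatProfileDeriv l γ₁' γ₂')
      = energy f₁ (l * s) γ₁ γ₁' + energy f₁ ((1 - l) * s) γ₂ γ₂' := by
  have hl' : (0:ℝ) < 1 - l := by linarith [hl.2]
  have hlmem : l ∈ uIcc (0:ℝ) 1 := by rw [uIcc_of_le zero_le_one]; exact ⟨hl.1.le, hl.2.le⟩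
  have hi := (h₁.concat hl h₂).intervalIntegrable_energyDensity hcont s
  have e₁ : ∫ u in (0:ℝ)..l, energyDensity f₁ s (concatProfile l γ₁ γ₂) (concatProfileDeriv l γ₁' γ₂') u
      = energy f₁ (l * s) γ₁ γ₁' := by
    rw [← integral_energyDensity_comp_sub_div f₁ s 0 hl.1, zero_add]
    refine intervalIntegral.integral_congr fun u hu => ?_
    rw [uIcc_of_le hl.1.le] at hu
    simp [energyDensity, concatProfile, concatProfileDeriv, hu.2]
  have e₂ : ∫ u in l..1, energyDensity f₁ s (concatProfile l γ₁ γ₂) (concatProfileDeriv l γ₁' γ₂') u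
      = energy f₁ ((1 - l) * s) γ₂ γ₂' := by
    rw [← integral_energyDensity_comp_sub_div f₁ s l hl', add_sub_cancel]
    refine intervalIntegral.integral_congr_ae (ae_of_all _ fun u hu => ?_)
    rw [uIoc_of_le hl.2.le] at hu
    simp [energyDensity, concatProfile, concatProfileDeriv, hu.1.not_ge]
  rw [energy_eq_integral_energyDensity, ← intervalIntegral.integral_add_adjacent_intervals
    (hi.mono_set (uIcc_subset_uIcc_left hlmem)) (hi.mono_set (uIcc_subset_uIcc_right hlmem)),
    e₁, e₂]

end Concat

lemma F1Hyp.mapsTo {ℓ ℓ₁ : ℝ} {f₁ : ℝ → ℝ} (hf : F1Hyp ℓ ℓ₁ f₁) :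
    MapsTo f₁ (Icc 0 1) (Icc 0 ℓ) := fun t ht =>
  ⟨hf.nonneg t ht, hf.f10 ▸ hf.anti.antitoneOn ⟨le_rfl, zero_le_one⟩ ht ht.1⟩

section Density

variable {f₁ : ℝ → ℝ} {ℓ c : ℝ}

lemma gc_le_energy {γ γ' : ℝ → ℝ} (h : Admissible γ γ') (hc : c ≤ sSup (γ '' Icc 0 1))
    (s : ℝ) : gc f₁ c s ≤ energy f₁ s γ γ' :=
  csInf_le ⟨0, by rintro _ ⟨γ, γ', -, -, rfl⟩; exact energy_nonneg f₁ s γ γ'⟩ ⟨γ, γ', h, hc, rfl⟩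

lemma le_gc (hc : c ∈ Icc (0:ℝ) 1) {s a : ℝ}
    (H : ∀ γ γ', Admissible γ γ' → c ≤ sSup (γ '' Icc 0 1) → a ≤ energy f₁ s γ γ') :
    a ≤ gc f₁ c s :=
  le_csInf ⟨_, _, _, admissible_tent hc, le_sSup_tent hc, rfl⟩
    (by rintro _ ⟨γ, γ', h, hsup, rfl⟩; exact H γ γ' h hsup)

lemma g0_eq_gc_zero (f₁ : ℝ → ℝ) : g0 f₁ = gc f₁ 0 := by
  ext s
  refine congrArg sInf (Set.ext fun x => ⟨?_, ?_⟩)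
  · rintro ⟨γ, γ', h, hx⟩
    exact ⟨γ, γ', h, h.sSup_image_nonneg, hx⟩
  · rintro ⟨γ, γ', h, -, hx⟩
    exact ⟨γ, γ', h, hx⟩

lemma le_gc_self (hcont : ContinuousOn f₁ (Icc 0 1)) (hc : c ∈ Icc (0:ℝ) 1) (s : ℝ) :
    c ≤ gc f₁ c s :=
  le_gc hc fun _ _ h hsup => h.le_energy hcont hsup s

lemma gc_le_sqrt (hcont : ContinuousOn f₁ (Icc 0 1)) (hf : MapsTo f₁ (Icc 0 1) (Icc 0 ℓ))
    (hc : c ∈ Icc (0:ℝ) 1) (s : ℝ) : gc f₁ c s ≤ √((ℓ * s) ^ 2 + c ^ 2) :=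
  (gc_le_energy (admissible_tent hc) (le_sSup_tent hc) s).trans (energy_tent_le hcont hf hc s)

lemma gc_zero (hcont : ContinuousOn f₁ (Icc 0 1)) (hf : MapsTo f₁ (Icc 0 1) (Icc 0 ℓ))
    (hc : c ∈ Icc (0:ℝ) 1) : gc f₁ c 0 = c :=
  le_antisymm (by simpa [Real.sqrt_sq hc.1] using gc_le_sqrt hcont hf hc 0)
    (le_gc_self hcont hc 0)

lemma gc_le_add_mul (hcont : ContinuousOn f₁ (Icc 0 1)) (hf : MapsTo f₁ (Icc 0 1) (Icc 0 ℓ))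
    (hc : c ∈ Icc (0:ℝ) 1) {s : ℝ} (hs : 0 ≤ s) : gc f₁ c s ≤ c + ℓ * s := by
  have hℓ : 0 ≤ ℓ := (hf ⟨le_rfl, zero_le_one⟩).1.trans (hf ⟨le_rfl, zero_le_one⟩).2
  linarith [gc_le_sqrt hcont hf hc s, sqrt_sq_add_sq_le_add (mul_nonneg hℓ hs) hc.1]

lemma gc_le_one (hcont : ContinuousOn f₁ (Icc 0 1)) (hf : MapsTo f₁ (Icc 0 1) (Icc 0 ℓ))
    (hf1 : f₁ 1 = 0) (hc : c ∈ Icc (0:ℝ) 1) {s : ℝ} (hs : 0 ≤ s) : gc f₁ c s ≤ 1 :=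
  le_of_forall_mem_Ioo_le_add_mul (by norm_num : (0:ℝ) < 1/2) fun ε hε =>
    have hε' : ε ∈ Ioc (0:ℝ) (1/2) := ⟨hε.1, hε.2.le⟩
    (gc_le_energy (admissible_trapezoid hε') (hc.2.trans (one_le_sSup_trapezoid hε')) s).trans
      (energy_trapezoid_le hcont hf hf1 hε' hs)

lemma monotoneOn_gc (hcont : ContinuousOn f₁ (Icc 0 1)) (hc : c ∈ Icc (0:ℝ) 1) :
    MonotoneOn (gc f₁ c) (Ici 0) := fun s hs _ _ hst =>
  le_gc hc fun _ _ h hsup => (gc_le_energy h hsup s).trans (h.energy_mono hcont hs hst)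

lemma gc_mono_left {c₁ c₂ : ℝ} (hc₂ : c₂ ∈ Icc (0:ℝ) 1) (h : c₁ ≤ c₂) (s : ℝ) :
    gc f₁ c₁ s ≤ gc f₁ c₂ s :=
  le_gc hc₂ fun _ _ h' hsup => gc_le_energy h' (h.trans hsup) s

lemma gc_le_gc_add (hcont : ContinuousOn f₁ (Icc 0 1)) (hf : MapsTo f₁ (Icc 0 1) (Icc 0 ℓ))
    (hc : c ∈ Icc (0:ℝ) 1) (s t : ℝ) : gc f₁ c s ≤ gc f₁ c t + ℓ * |s - t| := by
  have : gc f₁ c s - ℓ * |s - t| ≤ gc f₁ c t := le_gc hc fun _ _ h hsup => by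
    linarith [gc_le_energy (f₁ := f₁) h hsup s, h.energy_le_energy_add hcont hf s t]
  linarith

lemma abs_gc_sub_le (hcont : ContinuousOn f₁ (Icc 0 1)) (hf : MapsTo f₁ (Icc 0 1) (Icc 0 ℓ))
    (hc : c ∈ Icc (0:ℝ) 1) (s t : ℝ) : |gc f₁ c s - gc f₁ c t| ≤ ℓ * |s - t| :=
  abs_sub_le_iff.2 ⟨by linarith [gc_le_gc_add hcont hf hc s t],
    by rw [abs_sub_comm]; linarith [gc_le_gc_add hcont hf hc t s]⟩

lemma gc_add_le_of_pos (hcont : ContinuousOn f₁ (Icc 0 1)) (hc : c ∈ Icc (0:ℝ) 1)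
    {s₁ s₂ : ℝ} (hs₁ : 0 < s₁) (hs₂ : 0 < s₂) :
    gc f₁ c (s₁ + s₂) ≤ gc f₁ 0 s₁ + gc f₁ c s₂ := by
  set l := s₁ / (s₁ + s₂)
  have hl : l ∈ Ioo (0:ℝ) 1 := ⟨by positivity, (div_lt_one (by positivity)).2 (by linarith)⟩
  have e₁ : l * (s₁ + s₂) = s₁ := div_mul_cancel₀ _ (by positivity)
  have e₂ : (1 - l) * (s₁ + s₂) = s₂ := by rw [sub_mul, e₁, one_mul, add_sub_cancel_left]
  have key : gc f₁ c (s₁ + s₂) - gc f₁ c s₂ ≤ gc f₁ 0 s₁ :=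
    le_gc ⟨le_rfl, zero_le_one⟩ fun γ₁ γ₁' h₁ _ => by
      have : gc f₁ c (s₁ + s₂) - energy f₁ s₁ γ₁ γ₁' ≤ gc f₁ c s₂ :=
        le_gc hc fun γ₂ γ₂' h₂ hsup => by
          have := gc_le_energy (f₁ := f₁) (h₁.concat hl h₂)
            (hsup.trans (sSup_image_le_sSup_image_concat hl h₁ h₂)) (s₁ + s₂)
          rw [energy_concat hcont hl h₁ h₂, e₁, e₂] at this
          linarith
      linarith
  linarith

lemma gc_add_le (hcont : ContinuousOn f₁ (Icc 0 1)) (hf : MapsTo f₁ (Icc 0 1) (Icc 0 ℓ))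
    (hc : c ∈ Icc (0:ℝ) 1) {s₁ s₂ : ℝ} (hs₁ : 0 ≤ s₁) (hs₂ : 0 ≤ s₂) :
    gc f₁ c (s₁ + s₂) ≤ g0 f₁ s₁ + gc f₁ c s₂ := by
  rw [g0_eq_gc_zero]
  refine le_of_forall_mem_Ioo_le_add_mul (K := 2 * ℓ) one_pos fun δ hδ => ?_
  have hlip : ∀ {c' s : ℝ}, c' ∈ Icc (0:ℝ) 1 → gc f₁ c' (s + δ) ≤ gc f₁ c' s + ℓ * δ :=
    fun {_ s} hc' => by
      simpa [abs_of_pos hδ.1] using gc_le_gc_add hcont hf hc' (s + δ) s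
  calc gc f₁ c (s₁ + s₂)
      ≤ gc f₁ c ((s₁ + δ) + (s₂ + δ)) :=
        monotoneOn_gc hcont hc (mem_Ici.2 (add_nonneg hs₁ hs₂))
          (mem_Ici.2 (by linarith [hδ.1])) (by linarith [hδ.1])
    _ ≤ gc f₁ 0 (s₁ + δ) + gc f₁ c (s₂ + δ) :=
        gc_add_le_of_pos hcont hc (by linarith [hδ.1]) (by linarith [hδ.1])
    _ ≤ gc f₁ 0 s₁ + gc f₁ c s₂ + 2 * ℓ * δ := by
        linarith [hlip (c' := 0) (s := s₁) ⟨le_rfl, zero_le_one⟩, hlip (s := s₂) hc]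

lemma tendsto_gc_sub_div (hcont : ContinuousOn f₁ (Icc 0 1))
    (hf : MapsTo f₁ (Icc 0 1) (Icc 0 ℓ)) (hc : c ∈ Icc (0:ℝ) 1) (hc0 : 0 < c) :
    Tendsto (fun s => (gc f₁ c s - c) / s) (𝓝[>] 0) (𝓝 0) := by
  have hlim : Tendsto (fun s => ℓ ^ 2 / (2 * c) * s) (𝓝[>] 0) (𝓝 0) := by
    have : Continuous fun s : ℝ => ℓ ^ 2 / (2 * c) * s := by fun_prop
    simpa using (this.tendsto 0).mono_left nhdsWithin_le_nhds
  refine squeeze_zero' ?_ ?_ hlim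
  · filter_upwards [self_mem_nhdsWithin] with s (hs : 0 < s)
    exact div_nonneg (sub_nonneg.2 (le_gc_self hcont hc s)) hs.le
  · filter_upwards [self_mem_nhdsWithin] with s (hs : 0 < s)
    have := (gc_le_sqrt hcont hf hc s).trans (sqrt_sq_add_sq_le_add_sq_div hc0)
    rw [div_le_iff₀ hs]
    calc gc f₁ c s - c ≤ (ℓ * s) ^ 2 / (2 * c) := by linarith
      _ = ℓ ^ 2 / (2 * c) * s * s := by ring

end Density

/-- basic properties of the constrained density `g_c`, for every `c ∈ [0,1]`:
(a) `g_c(0) = c`; (b) `c ≤ g_c(s) ≤ min(1, c + ℓ s)`; (c) monotone in `s` and in `c`;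
(d) `ℓ`-Lipschitz in `s`; (e) `g_c(s₁+s₂) ≤ g₀(s₁) + g_c(s₂)`;
(f) if `c > 0` then `(g_c(s) − c)/s → 0` as `s → 0⁺`. -/
theorem stmt_18 (ℓ ℓ₁ : ℝ) (f₁ : ℝ → ℝ) (hf : F1Hyp ℓ ℓ₁ f₁)
    (c : ℝ) (hc : c ∈ Icc (0:ℝ) 1) :
    gc f₁ c 0 = c ∧
    (∀ s : ℝ, 0 ≤ s → c ≤ gc f₁ c s ∧ gc f₁ c s ≤ min 1 (c + ℓ * s)) ∧
    MonotoneOn (gc f₁ c) (Ici 0) ∧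
    (∀ s : ℝ, 0 ≤ s → ∀ c₁ ∈ Icc (0:ℝ) 1, ∀ c₂ ∈ Icc (0:ℝ) 1, c₁ ≤ c₂ →
      gc f₁ c₁ s ≤ gc f₁ c₂ s) ∧
    (∀ s t : ℝ, 0 ≤ s → 0 ≤ t → |gc f₁ c s - gc f₁ c t| ≤ ℓ * |s - t|) ∧
    (∀ s₁ s₂ : ℝ, 0 ≤ s₁ → 0 ≤ s₂ → gc f₁ c (s₁ + s₂) ≤ g0 f₁ s₁ + gc f₁ c s₂) ∧
    (0 < c → Tendsto (fun s => (gc f₁ c s - c) / s) (nhdsWithin 0 (Ioi 0)) (nhds 0)) := by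
  have hcont := hf.cont
  have hmaps := hf.mapsTo
  refine ⟨gc_zero hcont hmaps hc, fun s hs => ⟨le_gc_self hcont hc s, ?_⟩,
    monotoneOn_gc hcont hc, fun s _ c₁ _ c₂ hc₂ h => gc_mono_left hc₂ h s,
    fun s t _ _ => abs_gc_sub_le hcont hmaps hc s t,
    fun s₁ s₂ hs₁ hs₂ => gc_add_le hcont hmaps hc hs₁ hs₂, tendsto_gc_sub_div hcont hmaps hc⟩
  exact le_min (gc_le_one hcont hmaps hf.f11 hc hs) (gc_le_add_mul hcont hmaps hc hs)
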